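/- arXiv:2305.18038 — 4 statements merged into one kernel-verified Lean document; each statement's English description precedes it below -/
import Mathlib

section
/- Let A be symmetric positive definite, s \geq 0, B = (A+sI)^{-1}, and t \geq 0 with t \neq s. Then for any vector r_0 and any m \geq 1, the Krylov subspace span{ B r_0, (B(A+tI)) B r_0, (B(A+tI))^2 B r_0, ..., (B(A+tI))^{m-1} B r_0 } equals the span of { B r_0, B^2 r_0, ..., B^m r_0 }. In particular this Krylov subspace is independent of the shift parameter t. -/
open Matrix

lemma krylov_term_eq {N : ℕ} (P : Matrix (Fin N) (Fin N) ℝ) (a b : ℝ) (j e n : ℕ) :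
    (b • P) ^ j * (a • (1:Matrix (Fin N) (Fin N) ℝ)) ^ e * (n : Matrix (Fin N) (Fin N) ℝ)
        = (b ^ j * a ^ e * (n : ℝ)) • P ^ j := by
  rw [smul_pow, smul_pow, one_pow, Matrix.smul_mul, Matrix.smul_mul, Matrix.mul_smul,
    Matrix.mul_one, Matrix.smul_mul, (Nat.cast_commute n (P ^ j)).symm.eq, ← nsmul_eq_mul,
    ← Nat.cast_smul_eq_nsmul ℝ n (P ^ j), smul_smul, smul_smul]

lemma krylov_le {N m : ℕ} (P : Matrix (Fin N) (Fin N) ℝ) (u : Fin N → ℝ) (a b : ℝ) :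
    Submodule.span ℝ (Set.range fun k : Fin m => (a • 1 + b • P) ^ (k : ℕ) *ᵥ u) ≤
    Submodule.span ℝ (Set.range fun k : Fin m => P ^ (k : ℕ) *ᵥ u) := by
  rw [Submodule.span_le]
  rintro _ ⟨k, rfl⟩
  show (a • 1 + b • P) ^ (k : ℕ) *ᵥ u ∈ _
  have hcomm : Commute (b • P) (a • (1 : Matrix (Fin N) (Fin N) ℝ)) := by
    simp [Commute, SemiconjBy, Matrix.mul_smul, Matrix.smul_mul, smul_comm a b]
  rw [add_comm (a • 1) (b • P), hcomm.add_pow]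
  rw [show (∑ j ∈ Finset.range ((k : ℕ) + 1),
      (b • P) ^ j * (a • (1:Matrix (Fin N) (Fin N) ℝ)) ^ ((k:ℕ) - j)
        * (((k:ℕ).choose j : ℕ) : Matrix (Fin N) (Fin N) ℝ)) *ᵥ u
      = ∑ j ∈ Finset.range ((k : ℕ) + 1),
        ((b • P) ^ j * (a • (1:Matrix (Fin N) (Fin N) ℝ)) ^ ((k:ℕ) - j)
          * (((k:ℕ).choose j : ℕ) : Matrix (Fin N) (Fin N) ℝ)) *ᵥ u
      from map_sum (Matrix.mulVec.addMonoidHomLeft u) _ _]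
  refine Submodule.sum_mem _ fun j hj => ?_
  rw [krylov_term_eq, Matrix.smul_mulVec]
  refine Submodule.smul_mem _ _ (Submodule.subset_span ?_)
  have hjm : j < m := lt_of_le_of_lt (Nat.lt_succ_iff.mp (Finset.mem_range.mp hj)) k.isLt
  exact ⟨⟨j, hjm⟩, rfl⟩

/-- With `A` SPD, `B = (A+sI)⁻¹`, `t ≥ 0`, `t ≠ s ≥ 0`, for any `r₀` and
`m ≥ 1`, `span{B r₀, (B(A+tI)) B r₀, …, (B(A+tI))^{m-1} B r₀} = span{B r₀, B² r₀, …, Bᵐ r₀}`;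
in particular the Krylov space is independent of the shift `t`. -/
theorem stmt2 {N : ℕ} (A : Matrix (Fin N) (Fin N) ℝ) (hA : A.PosDef)
    (s t : ℝ) (hs : 0 ≤ s) (ht : 0 ≤ t) (hst : s ≠ t)
    (r0 : Fin N → ℝ) (m : ℕ) (hm : 1 ≤ m) :
    Submodule.span ℝ (Set.range fun k : Fin m =>
        (((A + s • 1)⁻¹ * (A + t • 1)) ^ (k : ℕ)) *ᵥ ((A + s • 1)⁻¹ *ᵥ r0)) =
      Submodule.span ℝ (Set.range fun k : Fin m =>
        ((A + s • 1)⁻¹ ^ ((k : ℕ) + 1)) *ᵥ r0) := by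
  set B := (A + s • 1)⁻¹ with hB
  set u := B *ᵥ r0 with hu
  set c := t - s with hc'
  have hc : c ≠ 0 := sub_ne_zero.mpr (Ne.symm hst)
  -- A + s•1 is positive definite, hence invertible
  have hsem : (s • (1 : Matrix (Fin N) (Fin N) ℝ)).PosSemidef := by
    have h1 : s • (1 : Matrix (Fin N) (Fin N) ℝ) = Matrix.diagonal (fun _ => s) := by
      ext i j
      by_cases h : i = j <;>
        simp [Matrix.one_apply, Matrix.diagonal_apply, h]
    rw [h1]
    exact Matrix.posSemidef_diagonal_iff.mpr fun _ => hs
  have hAs : (A + s • (1 : Matrix (Fin N) (Fin N) ℝ)).PosDef := hA.add_posSemidef hsem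
  have hinv : B * (A + s • 1) = 1 := Matrix.nonsing_inv_mul _ hAs.det_pos.ne'.isUnit
  have hM : B * (A + t • 1) = 1 + c • B := by
    have hts : A + t • (1 : Matrix (Fin N) (Fin N) ℝ) = (A + s • 1) + c • 1 := by
      rw [add_assoc, ← add_smul, hc', add_sub_cancel]
    rw [hts, Matrix.mul_add, hinv, Matrix.mul_smul, Matrix.mul_one]
  have key : ∀ M : Matrix (Fin N) (Fin N) ℝ, M = 1 + c • B →
      Submodule.span ℝ (Set.range fun k : Fin m => M ^ (k : ℕ) *ᵥ u) =
      Submodule.span ℝ (Set.range fun k : Fin m => B ^ (k : ℕ) *ᵥ u) := by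
    intro M hMeq
    apply le_antisymm
    · rw [hMeq, show (1 : Matrix (Fin N) (Fin N) ℝ) + c • B = (1:ℝ) • 1 + c • B from by
        rw [one_smul]]
      exact krylov_le B u 1 c
    · have hBM : B = (-(c⁻¹)) • (1 : Matrix (Fin N) (Fin N) ℝ) + c⁻¹ • M := by
        rw [hMeq, smul_add, smul_smul, inv_mul_cancel₀ hc, one_smul, neg_smul, neg_add_cancel_left]
      calc Submodule.span ℝ (Set.range fun k : Fin m => B ^ (k : ℕ) *ᵥ u)
          = Submodule.span ℝ (Set.range fun k : Fin m =>
              ((-(c⁻¹)) • 1 + c⁻¹ • M) ^ (k : ℕ) *ᵥ u) := by rw [← hBM]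
        _ ≤ _ := krylov_le M u _ _
  have hR : ∀ k : ℕ, B ^ (k + 1) *ᵥ r0 = B ^ k *ᵥ u := by
    intro k
    rw [pow_succ, ← Matrix.mulVec_mulVec, hu]
  simp only [hR, hM]
  exact key _ rfl
end

section
/- Let A be a real symmetric positive definite N\times N matrix, b a vector, and x = A^{-1} b. For the conjugate gradient method with zero initial guess, the m-th iterate x_m satisfies \|x - x_m\|_A \leq 2 ((\sqrt{\kappa}-1)/(\sqrt{\kappa}+1))^m \|x\|_A, where \kappa = \lambda_{max}(A)/\lambda_{min}(A) and \|v\|_A = \sqrt{v^T A v}. -/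
open Matrix Polynomial

/-!
The error `x - xₘ` minimises the `A`-energy over `x - Kₘ`, which contains `p(A) x` for every
polynomial `p` of degree at most `m` with `p(0) = 1`. Diagonalising `A`, the energy of `p(A) x` is
at most `max p(λ)²` times that of `x`, the maximum taken over the eigenvalues `λ`. For `p` take the
Chebyshev polynomial `Tₘ` composed with the affine map sending `[λmin, λmax]` onto `[-1, 1]`,
normalised at `0`: it is bounded by `1 / Tₘ((κ + 1)/(κ - 1))` there, and writing
`(κ + 1)/(κ - 1) = (t + t⁻¹)/2` with `t = (√κ + 1)/(√κ - 1)` gives `Tₘ((κ + 1)/(κ - 1)) ≥ tᵐ / 2`.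
-/

theorem Matrix.aeval_diagonal {n R : Type*} [Fintype n] [DecidableEq n] [CommSemiring R]
    (d : n → R) (p : R[X]) : aeval (diagonal d) p = diagonal fun i => p.eval (d i) := by
  rw [← diagonalAlgHom_apply (R := R), aeval_algHom_apply, diagonalAlgHom_apply, aeval_pi_apply]
  rfl

namespace Matrix.IsHermitian

variable {n : Type*} [Fintype n] [DecidableEq n] {A : Matrix n n ℝ} (hA : A.IsHermitian)

theorem aeval_eq (p : ℝ[X]) :
    aeval A p = (hA.eigenvectorUnitary : Matrix n n ℝ) *
      diagonal (fun i => p.eval (hA.eigenvalues i)) *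
      star (hA.eigenvectorUnitary : Matrix n n ℝ) := by
  conv_lhs => rw [hA.spectral_theorem]
  rw [aeval_algHom_apply, Unitary.conjStarAlgAut_apply, aeval_diagonal]
  rfl

theorem aeval_mulVec_dotProduct_aeval_mulVec (p q : ℝ[X]) (x : n → ℝ) :
    (aeval A p *ᵥ x) ⬝ᵥ (aeval A q *ᵥ x) = ∑ i, p.eval (hA.eigenvalues i) *
      q.eval (hA.eigenvalues i) * ((star (hA.eigenvectorUnitary : Matrix n n ℝ)) *ᵥ x) i ^ 2 := by
  set U : Matrix n n ℝ := (hA.eigenvectorUnitary : Matrix n n ℝ)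
  have hU : Uᵀ * U = 1 := by
    simpa [U, star_eq_conjTranspose] using Unitary.coe_star_mul_self hA.eigenvectorUnitary
  rw [hA.aeval_eq, hA.aeval_eq, ← mulVec_mulVec, ← mulVec_mulVec, ← mulVec_mulVec, ← mulVec_mulVec,
    dotProduct_mulVec, ← mulVec_transpose, mulVec_mulVec, hU, one_mulVec]
  simp only [star_eq_conjTranspose, conjTranspose_eq_transpose_of_trivial, mulVec_diagonal,
    dotProduct, U]
  exact Finset.sum_congr rfl fun i _ => by ring

end Matrix.IsHermitian

theorem Matrix.PosSemidef.aeval_mulVec_dotProduct_mulVec_le {n : Type*} [Fintype n]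
    [DecidableEq n] {A : Matrix n n ℝ} (hA : A.PosSemidef) {p : ℝ[X]} {B : ℝ}
    (hp : ∀ i, |p.eval (hA.1.eigenvalues i)| ≤ B) (x : n → ℝ) :
    (aeval A p *ᵥ x) ⬝ᵥ (A *ᵥ (aeval A p *ᵥ x)) ≤ B ^ 2 * (x ⬝ᵥ (A *ᵥ x)) := by
  have hx : x ⬝ᵥ (A *ᵥ x) = (aeval A (1 : ℝ[X]) *ᵥ x) ⬝ᵥ (aeval A (X : ℝ[X]) *ᵥ x) := by simp
  have hpx : A *ᵥ (aeval A p *ᵥ x) = aeval A (X * p) *ᵥ x := by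
    rw [mulVec_mulVec, map_mul, aeval_X]
  rw [hx, hpx, hA.1.aeval_mulVec_dotProduct_aeval_mulVec,
    hA.1.aeval_mulVec_dotProduct_aeval_mulVec, Finset.mul_sum]
  refine Finset.sum_le_sum fun i _ => ?_
  set μ := hA.1.eigenvalues i
  set d := ((star (hA.1.eigenvectorUnitary : Matrix n n ℝ)) *ᵥ x) i
  have hsq : p.eval μ ^ 2 ≤ B ^ 2 := sq_le_sq' (abs_le.mp (hp i)).1 (abs_le.mp (hp i)).2
  have hμd : 0 ≤ μ * d ^ 2 := mul_nonneg (hA.eigenvalues_nonneg i) (sq_nonneg d)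
  calc p.eval μ * (X * p).eval μ * d ^ 2 = p.eval μ ^ 2 * (μ * d ^ 2) := by
        rw [eval_mul, eval_X]; ring
    _ ≤ B ^ 2 * (μ * d ^ 2) := mul_le_mul_of_nonneg_right hsq hμd
    _ = B ^ 2 * ((1 : ℝ[X]).eval μ * (X : ℝ[X]).eval μ * d ^ 2) := by
        rw [eval_one, eval_X, one_mul]

theorem aeval_mulVec_mem_span_pow_mulVec {R n : Type*} [CommRing R] [Fintype n] [DecidableEq n]
    (A : Matrix n n R) (b : n → R) {m : ℕ} {q : R[X]} (hq : q ∈ degreeLT R m) :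
    aeval A q *ᵥ b ∈ Submodule.span R (Set.range fun k : Fin m => (A ^ (k : ℕ)) *ᵥ b) := by
  classical
  rw [degreeLT_eq_span_X_pow] at hq
  induction hq using Submodule.span_induction with
  | mem q hq =>
    obtain ⟨k, hk, rfl⟩ := Finset.mem_image.mp hq
    rw [map_pow, aeval_X]
    exact Submodule.subset_span ⟨⟨k, Finset.mem_range.mp hk⟩, rfl⟩
  | zero => simp
  | add q r _ _ hq hr => simpa [add_mulVec] using add_mem hq hr
  | smul c q _ hq => simpa [smul_mulVec] using Submodule.smul_mem _ c hq

theorem divX_one_sub_mem_degreeLT {R : Type*} [CommRing R] {m : ℕ} {p : R[X]}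
    (hp : p.natDegree ≤ m) :
    (1 - p).divX ∈ degreeLT R m := by
  rw [mem_degreeLT]
  by_cases h : 1 - p = 0
  · simp [h]
  refine (degree_divX_lt h).trans_le (degree_le_of_natDegree_le ?_)
  exact (natDegree_sub_le _ _).trans (by simpa using hp)

theorem sub_aeval_mulVec_mem_span_pow_mulVec {R n : Type*} [CommRing R] [Fintype n] [DecidableEq n]
    (A : Matrix n n R) {x b : n → R} (hx : A *ᵥ x = b) {m : ℕ} {p : R[X]} (hp : p.natDegree ≤ m)
    (hp0 : p.eval 0 = 1) :
    x - aeval A p *ᵥ x ∈ Submodule.span R (Set.range fun k : Fin m => (A ^ (k : ℕ)) *ᵥ b) := by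
  have hq : (1 - p).divX * X = 1 - p := by
    have h := X_mul_divX_add (1 - p)
    rwa [coeff_zero_eq_eval_zero, eval_sub, eval_one, hp0, sub_self, C_0, add_zero, mul_comm] at h
  convert aeval_mulVec_mem_span_pow_mulVec A b (divX_one_sub_mem_degreeLT hp) using 1
  have hA : A = aeval A (X : R[X]) := (aeval_X A).symm
  rw [← hx, mulVec_mulVec]
  nth_rw 3 [hA]
  rw [← map_mul, hq, map_sub, map_one, sub_mulVec, one_mulVec]

theorem Polynomial.Chebyshev.pow_div_two_le_eval_T_real {t : ℝ} (ht : 0 < t) (n : ℕ) :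
    t ^ n / 2 ≤ (T ℝ n).eval ((t + t⁻¹) / 2) := by
  have hcosh : (t + t⁻¹) / 2 = Real.cosh (Real.log t) := by
    rw [Real.cosh_eq, Real.exp_neg, Real.exp_log ht]
  rw [hcosh, T_real_cosh, Real.cosh_eq, Int.cast_natCast, Real.exp_nat_mul, Real.exp_log ht]
  linarith [Real.exp_pos (-(n * Real.log t))]

open Polynomial.Chebyshev in
theorem exists_eval_zero_eq_one_abs_eval_le_of_lt {a c : ℝ} (ha : 0 < a) (hac : a < c) (m : ℕ) :
    ∃ p : ℝ[X], p.natDegree ≤ m ∧ p.eval 0 = 1 ∧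
      ∀ t ∈ Set.Icc a c, |p.eval t| ≤ 2 * ((√(c / a) - 1) / (√(c / a) + 1)) ^ m := by
  set s := √(c / a)
  have hs : 1 < s := Real.lt_sqrt_of_sq_lt (by simpa using (one_lt_div ha).2 hac)
  have hcs : c = a * s ^ 2 := by
    rw [Real.sq_sqrt (div_pos (ha.trans hac) ha).le]; field_simp
  set t₀ := (s + 1) / (s - 1)
  have ht₀ : 0 < t₀ := div_pos (by linarith) (by linarith)
  set σ := (c + a) / (c - a)
  have hσ : σ = (t₀ + t₀⁻¹) / 2 := by
    have : s - 1 ≠ 0 := by linarith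
    have : s ^ 2 - 1 ≠ 0 := by nlinarith
    simp only [σ, t₀, hcs]
    field_simp
    ring
  have hTσ : t₀ ^ m / 2 ≤ (T ℝ m).eval σ := hσ ▸ pow_div_two_le_eval_T_real ht₀ m
  have hTσ_pos : 0 < (T ℝ m).eval σ := lt_of_lt_of_le (by positivity) hTσ
  set ℓ : ℝ[X] := C (-2 / (c - a)) * X + C σ
  refine ⟨C ((T ℝ m).eval σ)⁻¹ * (T ℝ m).comp ℓ, ?_, ?_, ?_⟩
  · refine (natDegree_C_mul_le _ _).trans ?_
    rw [natDegree_comp, natDegree_T, Int.natAbs_natCast]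
    exact (Nat.mul_le_mul_left m (natDegree_linear_le : ℓ.natDegree ≤ 1)).trans_eq (mul_one m)
  · simp [ℓ, hTσ_pos.ne']
  · rintro t ⟨hat, htc⟩
    have hca : 0 < c - a := by linarith
    have hℓ : |ℓ.eval t| ≤ 1 := by
      have : ℓ.eval t = (c + a - 2 * t) / (c - a) := by
        simp only [ℓ, σ, eval_add, eval_mul, eval_C, eval_X]
        field_simp
        ring
      rw [this, abs_le, le_div_iff₀ hca, div_le_one hca]
      constructor <;> linarith
    calc |(C ((T ℝ m).eval σ)⁻¹ * (T ℝ m).comp ℓ).eval t|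
        = ((T ℝ m).eval σ)⁻¹ * |(T ℝ m).eval (ℓ.eval t)| := by
          rw [eval_mul, eval_C, eval_comp, abs_mul, abs_of_pos (inv_pos.mpr hTσ_pos)]
      _ ≤ ((T ℝ m).eval σ)⁻¹ :=
          mul_le_of_le_one_right (inv_pos.mpr hTσ_pos).le (abs_eval_T_real_le_one m hℓ)
      _ ≤ (t₀ ^ m / 2)⁻¹ := inv_anti₀ (by positivity) hTσ
      _ = 2 * ((s - 1) / (s + 1)) ^ m := by rw [inv_div, div_eq_mul_inv, ← inv_pow, inv_div]

theorem exists_eval_zero_eq_one_abs_eval_le {a c : ℝ} (ha : 0 < a) (hac : a ≤ c) (m : ℕ) :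
    ∃ p : ℝ[X], p.natDegree ≤ m ∧ p.eval 0 = 1 ∧
      ∀ t ∈ Set.Icc a c, |p.eval t| ≤ 2 * ((√(c / a) - 1) / (√(c / a) + 1)) ^ m := by
  rcases hac.eq_or_lt with rfl | hac
  · refine ⟨(C (-a⁻¹) * X + C 1) ^ m,
      (natDegree_pow_le_of_le m natDegree_linear_le).trans_eq (mul_one m), by simp, ?_⟩
    rintro t ⟨hat, hta⟩
    obtain rfl := le_antisymm hta hat
    rcases m.eq_zero_or_pos with rfl | hm
    · norm_num
    · simp [ha.ne', hm.ne']
  · exact exists_eval_zero_eq_one_abs_eval_le_of_lt ha hac m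

theorem stmt5_general {N : ℕ} (A : Matrix (Fin N) (Fin N) ℝ) (hA : A.PosDef)
    (b x : Fin N → ℝ) (hx : A *ᵥ x = b) (m : ℕ)
    (K : Submodule ℝ (Fin N → ℝ))
    (hK : K = Submodule.span ℝ (Set.range fun k : Fin m => (A ^ (k : ℕ)) *ᵥ b))
    (xm : Fin N → ℝ)
    (hmin : ∀ y ∈ K, (x - xm) ⬝ᵥ (A *ᵥ (x - xm)) ≤ (x - y) ⬝ᵥ (A *ᵥ (x - y)))
    (κ : ℝ) (hκ : κ = (⨆ i, hA.1.eigenvalues i) / (⨅ i, hA.1.eigenvalues i)) :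
    Real.sqrt ((x - xm) ⬝ᵥ (A *ᵥ (x - xm))) ≤
      2 * ((Real.sqrt κ - 1) / (Real.sqrt κ + 1)) ^ m * Real.sqrt (x ⬝ᵥ (A *ᵥ x)) := by
  subst hκ hK
  rcases isEmpty_or_nonempty (Fin N) with hN | hN
  · simp [dotProduct]
  set ev := hA.1.eigenvalues
  obtain ⟨j, hj⟩ := exists_eq_ciInf_of_finite (f := ev)
  have hev : ∀ i, ev i ∈ Set.Icc (⨅ i, ev i) (⨆ i, ev i) := fun i =>
    ⟨ciInf_le (Finite.bddBelow_range _) i, le_ciSup (Finite.bddAbove_range _) i⟩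
  obtain ⟨p, hp_deg, hp_zero, hp⟩ :=
    exists_eval_zero_eq_one_abs_eval_le (hj ▸ hA.eigenvalues_pos j) ((hev j).1.trans (hev j).2) m
  set B := 2 * ((√((⨆ i, ev i) / ⨅ i, ev i) - 1) / (√((⨆ i, ev i) / ⨅ i, ev i) + 1)) ^ m
  have hB : 0 ≤ B := (abs_nonneg _).trans (hp _ (hev j))
  have henergy : (x - xm) ⬝ᵥ (A *ᵥ (x - xm)) ≤ B ^ 2 * (x ⬝ᵥ (A *ᵥ x)) :=
    calc (x - xm) ⬝ᵥ (A *ᵥ (x - xm))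
        ≤ (x - (x - aeval A p *ᵥ x)) ⬝ᵥ (A *ᵥ (x - (x - aeval A p *ᵥ x))) :=
          hmin _ (sub_aeval_mulVec_mem_span_pow_mulVec A hx hp_deg hp_zero)
      _ ≤ B ^ 2 * (x ⬝ᵥ (A *ᵥ x)) := by
          rw [sub_sub_cancel]
          exact hA.posSemidef.aeval_mulVec_dotProduct_mulVec_le (fun i => hp _ (hev i)) x
  calc √((x - xm) ⬝ᵥ (A *ᵥ (x - xm)))
      ≤ √(B ^ 2 * (x ⬝ᵥ (A *ᵥ x))) := Real.sqrt_le_sqrt henergy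
    _ = B * √(x ⬝ᵥ (A *ᵥ x)) := by rw [Real.sqrt_mul (sq_nonneg B), Real.sqrt_sq hB]

/-- CG convergence: with `A` SPD, `x = A⁻¹ b`, and the `m`-th CG iterate
`x_m` characterized as the `A`-norm best approximation to `x` from the Krylov space
`K_m = span{b, Ab, …, A^{m-1}b}`, one has
`‖x - x_m‖_A ≤ 2 ((√κ - 1)/(√κ + 1))^m ‖x‖_A`, `κ = λ_max(A)/λ_min(A)`. -/
theorem stmt5 {N : ℕ} (A : Matrix (Fin N) (Fin N) ℝ) (hA : A.PosDef)
    (b x : Fin N → ℝ) (hx : A *ᵥ x = b) (m : ℕ)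
    (K : Submodule ℝ (Fin N → ℝ))
    (hK : K = Submodule.span ℝ (Set.range fun k : Fin m => (A ^ (k : ℕ)) *ᵥ b))
    (xm : Fin N → ℝ) (hxm : xm ∈ K)
    (hmin : ∀ y ∈ K, (x - xm) ⬝ᵥ (A *ᵥ (x - xm)) ≤ (x - y) ⬝ᵥ (A *ᵥ (x - y)))
    (κ : ℝ) (hκ : κ = (⨆ i, hA.1.eigenvalues i) / (⨅ i, hA.1.eigenvalues i)) :
    Real.sqrt ((x - xm) ⬝ᵥ (A *ᵥ (x - xm))) ≤
      2 * ((Real.sqrt κ - 1) / (Real.sqrt κ + 1)) ^ m * Real.sqrt (x ⬝ᵥ (A *ᵥ x)) :=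
  stmt5_general A hA b x hx m K hK xm hmin κ hκ
end

section
/- Orthogonal greedy algorithm error decay: let V be a Hilbert space, D \subset V a dictionary of unit-norm elements, \varphi \in L_1(D) where \|\varphi\|_{L_1(D)} = inf{\sum_i |c_i| : \varphi = \sum_i c_i g_i, g_i \in D}. Define \varphi_0 = 0 and iteratively g_n = argmax_{g \in D} \langle g, \varphi - \varphi_{n-1} \rangle, \varphi_n = orthogonal projection of \varphi onto span{g_1, ..., g_n}. Then \|\varphi - \varphi_n\| \leq \|\varphi\|_{L_1(D)} (n+1)^{-1/2}. -/
/-!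
The residual `r n = φ - φₙ` is orthogonal to `φₙ`, so `‖r n‖² = ⟪r n, φ⟫`, and expanding `φ`
along any representation `∑ cₖ gₖ` bounds this by `(∑ |cₖ|) tₙ`, where `tₙ = ⟪g_{n+1}, r n⟫`
dominates every `|⟪h, r n⟫|`, `h ∈ D`, by greedy choice and symmetry of `D`. On the other
hand `φ_{n+1}` is at least as close to `φ` as `φₙ + tₙ g_{n+1}`, which gives
`‖r (n+1)‖² ≤ ‖r n‖² - tₙ²`. With `aₙ = ‖r n‖²` and `M = ‖φ‖_{L₁(D)}` this is the recursion
`aₙ₊₁ ≤ aₙ - aₙ² / M²`, whose solutions decay like `M² / (n + 1)`.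
-/

open scoped RealInnerProductSpace

lemma mul_add_one_le_of_mul_le_mul_sub_sq {a : ℕ → ℝ} {K : ℝ} (hK : 0 ≤ K) (h0 : a 0 ≤ K)
    (hstep : ∀ n, a (n + 1) * K ≤ a n * K - a n ^ 2) (n : ℕ) : a n * (n + 1) ≤ K := by
  rcases hK.eq_or_lt with rfl | hK
  · have : a n = 0 := pow_eq_zero_iff two_ne_zero |>.1 <|
      le_antisymm (by linarith [hstep n]) (sq_nonneg _)
    simp [this]
  induction n with
  | zero => simpa using h0
  | succ m ih =>
    push_cast
    have hb : a m ≤ K := by nlinarith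
    -- `K² - (a m * K - a m ^ 2) * (m + 2) = (K - a m * (m + 1)) * (K - a m) + a m ^ 2`
    have key : (a m * K - a m ^ 2) * (m + 2) ≤ K ^ 2 := by
      nlinarith [mul_nonneg (sub_nonneg.2 ih) (sub_nonneg.2 hb), sq_nonneg (a m)]
    have : a (m + 1) * (m + 1 + 1) * K ≤ K * K := by nlinarith [hstep m]
    exact le_of_mul_le_mul_right this hK

lemma le_csInf_mul {S : Set ℝ} (hne : S.Nonempty) {x t : ℝ} (ht : 0 ≤ t)
    (h : ∀ m ∈ S, x ≤ m * t) : x ≤ sInf S * t := by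
  rw [mul_comm, ← smul_eq_mul, ← Real.sInf_smul_of_nonneg ht]
  refine le_csInf hne.smul_set ?_
  rintro _ ⟨m, hm, rfl⟩
  simpa only [smul_eq_mul, mul_comm t] using h m hm

lemma le_div_sqrt_of_sq_mul_le {x M r : ℝ} (hM : 0 ≤ M) (hr : 0 < r) (h : x ^ 2 * r ≤ M ^ 2) :
    x ≤ M / Real.sqrt r := by
  rw [le_div_iff₀ (Real.sqrt_pos.2 hr)]
  refine (abs_le_of_sq_le_sq ?_ hM).trans' (le_abs_self _)
  rwa [mul_pow, Real.sq_sqrt hr.le]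

section InnerProductSpace

variable {V : Type*} [NormedAddCommGroup V] [InnerProductSpace ℝ V]

lemma abs_inner_le_of_forall_inner_le {D : Set V} (hDsymm : ∀ g ∈ D, -g ∈ D) {v : V} {t : ℝ}
    (hle : ∀ g ∈ D, ⟪g, v⟫ ≤ t) {g : V} (hg : g ∈ D) : |⟪g, v⟫| ≤ t := by
  have := hle _ (hDsymm g hg)
  rw [inner_neg_left] at this
  exact abs_le.2 ⟨by linarith, hle g hg⟩

lemma norm_sub_le_of_forall_inner_eq_zero {K : Submodule ℝ V} {φ p q : V} (hp : p ∈ K)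
    (hq : q ∈ K) (horth : ∀ v ∈ K, ⟪φ - p, v⟫ = 0) : ‖φ - p‖ ≤ ‖φ - q‖ := by
  have hpyth : ‖φ - q‖ ^ 2 = ‖φ - p‖ ^ 2 + ‖p - q‖ ^ 2 := by
    rw [← sub_add_sub_cancel φ p q, norm_add_sq_real, horth _ (K.sub_mem hp hq)]
    ring
  exact (pow_le_pow_iff_left₀ (norm_nonneg _) (norm_nonneg _) two_ne_zero).1
    (by nlinarith [sq_nonneg ‖p - q‖])

lemma norm_sub_inner_smul_sq {g : V} (hg : ‖g‖ = 1) (w : V) :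
    ‖w - ⟪g, w⟫ • g‖ ^ 2 = ‖w‖ ^ 2 - ⟪g, w⟫ ^ 2 := by
  rw [norm_sub_sq_real, real_inner_smul_right, real_inner_comm, norm_smul, hg,
    Real.norm_eq_abs, mul_one, sq_abs]
  ring

lemma inner_le_tsum_abs_mul {v φ : V} {g : ℕ → V} {c : ℕ → ℝ} {t : ℝ}
    (hbound : ∀ k, |⟪v, g k⟫| ≤ t) (hc : Summable fun k => |c k|)
    (hφ : HasSum (fun k => c k • g k) φ) : ⟪v, φ⟫ ≤ (∑' k, |c k|) * t := by
  have hinner : HasSum (fun k => c k * ⟪v, g k⟫) ⟪v, φ⟫ := by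
    simpa only [innerSL_apply_apply, inner_smul_right] using (innerSL ℝ v).hasSum hφ
  have hterm : ∀ k, c k * ⟪v, g k⟫ ≤ |c k| * t := fun k =>
    calc c k * ⟪v, g k⟫ ≤ |c k| * |⟪v, g k⟫| := (le_abs_self _).trans (abs_mul _ _).le
      _ ≤ |c k| * t := mul_le_mul_of_nonneg_left (hbound k) (abs_nonneg _)
  rw [← tsum_mul_right, ← hinner.tsum_eq]
  exact hinner.summable.tsum_le_tsum hterm (hc.mul_right t)

/-- `sInf (l1Costs D φ)` is the variation norm `‖φ‖_{L₁(D)}`. -/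
def l1Costs (D : Set V) (φ : V) : Set ℝ :=
  {M | ∃ (g : ℕ → V) (c : ℕ → ℝ), (∀ k, g k ∈ D) ∧
    Summable (fun k => |c k|) ∧ HasSum (fun k => c k • g k) φ ∧ M = ∑' k, |c k|}

lemma sInf_l1Costs_nonneg (D : Set V) (φ : V) : 0 ≤ sInf (l1Costs D φ) := by
  refine Real.sInf_nonneg ?_
  rintro _ ⟨-, c, -, -, -, rfl⟩
  exact tsum_nonneg fun k => abs_nonneg _

lemma inner_le_sInf_l1Costs_mul {D : Set V} {φ v : V} {t : ℝ} (hne : (l1Costs D φ).Nonempty)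
    (ht : 0 ≤ t) (hbound : ∀ g ∈ D, |⟪g, v⟫| ≤ t) : ⟪v, φ⟫ ≤ sInf (l1Costs D φ) * t := by
  refine le_csInf_mul hne ht ?_
  rintro _ ⟨g, c, hg, hc, hsum, rfl⟩
  exact inner_le_tsum_abs_mul (fun k => real_inner_comm (g k) v ▸ hbound _ (hg k)) hc hsum

lemma norm_sub_sq_le_of_forall_inner_eq_zero {K : Submodule ℝ V} {φ p p' g : V}
    (hp' : p' ∈ K) (horth : ∀ v ∈ K, ⟪φ - p', v⟫ = 0) (hp : p ∈ K) (hgK : g ∈ K)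
    (hg : ‖g‖ = 1) : ‖φ - p'‖ ^ 2 ≤ ‖φ - p‖ ^ 2 - ⟪g, φ - p⟫ ^ 2 := by
  calc ‖φ - p'‖ ^ 2 ≤ ‖φ - (p + ⟪g, φ - p⟫ • g)‖ ^ 2 := by
        gcongr
        exact norm_sub_le_of_forall_inner_eq_zero hp' (K.add_mem hp (K.smul_mem _ hgK)) horth
    _ = ‖φ - p‖ ^ 2 - ⟪g, φ - p⟫ ^ 2 := by rw [← sub_sub, norm_sub_inner_smul_sq hg]

end InnerProductSpace

theorem stmt12_general {V : Type*} [NormedAddCommGroup V] [InnerProductSpace ℝ V]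
    (D : Set V) (hD : ∀ g ∈ D, ‖g‖ = 1) (hDsymm : ∀ g ∈ D, -g ∈ D)
    (φ : V)
    (S : Set ℝ)
    (hS : S = {M | ∃ (g : ℕ → V) (c : ℕ → ℝ), (∀ k, g k ∈ D) ∧
      Summable (fun k => |c k|) ∧ HasSum (fun k => c k • g k) φ ∧ M = ∑' k, |c k|})
    (hne : S.Nonempty)
    (φs : ℕ → V) (g : ℕ → V)
    (hφ0 : φs 0 = 0)
    (hgmem : ∀ n : ℕ, g (n + 1) ∈ D)
    (hgmax : ∀ n : ℕ, ∀ h ∈ D, (inner ℝ h (φ - φs n) : ℝ) ≤ inner ℝ (g (n + 1)) (φ - φs n))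
    (hmem : ∀ n : ℕ, φs (n + 1) ∈ Submodule.span ℝ (g '' Set.Icc 1 (n + 1)))
    (hproj : ∀ n : ℕ, ∀ v ∈ Submodule.span ℝ (g '' Set.Icc 1 (n + 1)),
      (inner ℝ (φ - φs (n + 1)) v : ℝ) = 0)
    (n : ℕ) :
    ‖φ - φs n‖ ≤ sInf S / Real.sqrt (n + 1) := by
  obtain rfl : S = l1Costs D φ := hS
  set M := sInf (l1Costs D φ)
  set t : ℕ → ℝ := fun n => ⟪g (n + 1), φ - φs n⟫
  have hgreedy : ∀ n, ∀ h ∈ D, |⟪h, φ - φs n⟫| ≤ t n := fun n _ =>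
    abs_inner_le_of_forall_inner_le hDsymm (hgmax n)
  have ht : ∀ n, 0 ≤ t n := fun n => (abs_nonneg _).trans (hgreedy n _ (hgmem n))
  have horth : ∀ n, ⟪φ - φs n, φs n⟫ = 0
    | 0 => by simp [hφ0]
    | n + 1 => hproj n _ (hmem n)
  have hvariation : ∀ n, ‖φ - φs n‖ ^ 2 ≤ M * t n := by
    intro n
    rw [← real_inner_self_eq_norm_sq, inner_sub_right, horth, sub_zero]
    exact inner_le_sInf_l1Costs_mul hne (ht n) (hgreedy n)
  have hdescent : ∀ n, ‖φ - φs (n + 1)‖ ^ 2 ≤ ‖φ - φs n‖ ^ 2 - t n ^ 2 := by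
    intro n
    refine norm_sub_sq_le_of_forall_inner_eq_zero (hmem n) (hproj n) ?_
      (Submodule.subset_span ⟨n + 1, ⟨by omega, le_rfl⟩, rfl⟩) (hD _ (hgmem n))
    cases n with
    | zero => simp [hφ0]
    | succ m =>
      exact Submodule.span_mono (Set.image_mono (Set.Icc_subset_Icc_right (by omega))) (hmem m)
  have hM := sInf_l1Costs_nonneg D φ
  have hbase : ‖φ - φs 0‖ ≤ M := by
    have h := (hvariation 0).trans (mul_le_mul_of_nonneg_left
      ((real_inner_le_norm _ _).trans_eq (by rw [hD _ (hgmem 0), one_mul])) hM)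
    nlinarith [norm_nonneg (φ - φs 0)]
  refine le_div_sqrt_of_sq_mul_le hM (by positivity) ?_
  exact mul_add_one_le_of_mul_le_mul_sub_sq (a := fun n => ‖φ - φs n‖ ^ 2) (sq_nonneg M)
    (pow_le_pow_left₀ (norm_nonneg _) hbase 2)
    (fun n => by nlinarith [hdescent n, hvariation n, ht n, sq_nonneg M]) n

/-- Orthogonal greedy algorithm error decay: in a real Hilbert space `V`
with a symmetric unit-norm dictionary `D`, for `φ ∈ L₁(D)` (variation norm
`‖φ‖_{L₁(D)} = inf {∑|cᵢ| : φ = ∑ cᵢ gᵢ, gᵢ ∈ D}`), the OGA iterates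
(`φ₀ = 0`, `g_{n}` maximizing `⟨g, φ - φ_{n-1}⟩` over `D`, `φ_n` the orthogonal
projection of `φ` onto `span{g₁, …, g_n}`) satisfy
`‖φ - φ_n‖ ≤ ‖φ‖_{L₁(D)} (n+1)^{-1/2}`. -/
theorem stmt12 {V : Type*} [NormedAddCommGroup V] [InnerProductSpace ℝ V]
    [CompleteSpace V]
    (D : Set V) (hD : ∀ g ∈ D, ‖g‖ = 1) (hDsymm : ∀ g ∈ D, -g ∈ D)
    (φ : V)
    (S : Set ℝ)
    (hS : S = {M | ∃ (g : ℕ → V) (c : ℕ → ℝ), (∀ k, g k ∈ D) ∧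
      Summable (fun k => |c k|) ∧ HasSum (fun k => c k • g k) φ ∧ M = ∑' k, |c k|})
    (hne : S.Nonempty)
    (φs : ℕ → V) (g : ℕ → V)
    (hφ0 : φs 0 = 0)
    (hgmem : ∀ n : ℕ, g (n + 1) ∈ D)
    (hgmax : ∀ n : ℕ, ∀ h ∈ D, (inner ℝ h (φ - φs n) : ℝ) ≤ inner ℝ (g (n + 1)) (φ - φs n))
    (hmem : ∀ n : ℕ, φs (n + 1) ∈ Submodule.span ℝ (g '' Set.Icc 1 (n + 1)))
    (hproj : ∀ n : ℕ, ∀ v ∈ Submodule.span ℝ (g '' Set.Icc 1 (n + 1)),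
      (inner ℝ (φ - φs (n + 1)) v : ℝ) = 0)
    (n : ℕ) :
    ‖φ - φs n‖ ≤ sInf S / Real.sqrt (n + 1) :=
  stmt12_general D hD hDsymm φ S hS hne φs g hφ0 hgmem hgmax hmem hproj n
end

section
/- Let A, M be symmetric positive definite N\times N real matrices and t > 0. Then A + tM is symmetric positive definite, and the map t \mapsto (A + tM)^{-1} f is continuous and satisfies \|(A+tM)^{-1}f\|_M \leq \|f\|_{M^{-1}} / (t + \lambda_{min}(M^{-1}A)) in the M-norm, where \lambda_{min}(M^{-1}A) is the smallest generalized eigenvalue of A x = \lambda M x. -/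
/-!
Let `x = (A + tM)⁻¹ f`. Testing the equation `(A + tM) x = f` against `x` gives
`xᵀAx + t‖x‖_M² = xᵀf`. The Rayleigh quotient bound `xᵀAx ≥ λ_min ‖x‖_M²` turns the left
side into at least `(t + λ_min) ‖x‖_M²`, while Cauchy–Schwarz for the inner product
`⟨u, v⟩ = uᵀMv`, applied to `x` and `M⁻¹f`, bounds the right side by `‖x‖_M ‖f‖_{M⁻¹}`.
-/

open Matrix

theorem ContinuousOn.matrix_inv {X K n : Type*} [TopologicalSpace X] [Field K]
    [TopologicalSpace K] [IsTopologicalRing K] [ContinuousInv₀ K] [Fintype n] [DecidableEq n]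
    {B : X → Matrix n n K} {s : Set X} (hB : ContinuousOn B s)
    (hdet : ∀ x ∈ s, (B x).det ≠ 0) :
    ContinuousOn (fun x => (B x)⁻¹) s := fun x hx =>
  (continuousAt_matrix_inv _ (by rw [Ring.inverse_eq_inv']; exact continuousAt_inv₀ (hdet x hx))
    ).comp_continuousWithinAt (hB x hx)

namespace Matrix

variable {n : Type*} [Fintype n]

theorem PosSemidef.dotProduct_mulVec_self_nonneg {M : Matrix n n ℝ} (hM : M.PosSemidef)
    (x : n → ℝ) : 0 ≤ x ⬝ᵥ M *ᵥ x := by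
  simpa only [star_trivial] using hM.dotProduct_mulVec_nonneg x

theorem PosSemidef.dotProduct_mulVec_sq_le {M : Matrix n n ℝ} (hM : M.PosSemidef)
    (x y : n → ℝ) : (x ⬝ᵥ M *ᵥ y) ^ 2 ≤ (x ⬝ᵥ M *ᵥ x) * (y ⬝ᵥ M *ᵥ y) := by
  let := M.toSeminormedAddCommGroup hM
  let := M.toInnerProductSpace hM
  have h := real_inner_mul_inner_self_le x y
  -- the inner product of `M.toInnerProductSpace` is `⟪x, y⟫ = (M *ᵥ y) ⬝ᵥ star x`
  change (M *ᵥ y) ⬝ᵥ star x * ((M *ᵥ y) ⬝ᵥ star x) ≤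
    (M *ᵥ x) ⬝ᵥ star x * ((M *ᵥ y) ⬝ᵥ star y) at h
  simpa only [star_trivial, dotProduct_comm (M *ᵥ _), sq] using h

theorem PosDef.dotProduct_le_sqrt_mul_sqrt_inv [DecidableEq n] {M : Matrix n n ℝ}
    (hM : M.PosDef) (x f : n → ℝ) :
    x ⬝ᵥ f ≤ √(x ⬝ᵥ M *ᵥ x) * √(f ⬝ᵥ M⁻¹ *ᵥ f) := by
  set y := M⁻¹ *ᵥ f
  have hMy : M *ᵥ y = f := by
    rw [mulVec_mulVec, mul_nonsing_inv _ (isUnit_iff_ne_zero.mpr hM.det_pos.ne'), one_mulVec]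
  have hyMy : y ⬝ᵥ M *ᵥ y = f ⬝ᵥ M⁻¹ *ᵥ f := by rw [hMy, dotProduct_comm]
  calc x ⬝ᵥ f = x ⬝ᵥ M *ᵥ y := by rw [hMy]
    _ ≤ |x ⬝ᵥ M *ᵥ y| := le_abs_self _
    _ ≤ √((x ⬝ᵥ M *ᵥ x) * (y ⬝ᵥ M *ᵥ y)) :=
      Real.abs_le_sqrt (hM.posSemidef.dotProduct_mulVec_sq_le x y)
    _ = √(x ⬝ᵥ M *ᵥ x) * √(f ⬝ᵥ M⁻¹ *ᵥ f) := by
      rw [Real.sqrt_mul (hM.posSemidef.dotProduct_mulVec_self_nonneg x), hyMy]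

noncomputable def rayleighQuotient (A M : Matrix n n ℝ) (v : n → ℝ) : ℝ :=
  (v ⬝ᵥ A *ᵥ v) / (v ⬝ᵥ M *ᵥ v)

variable {A M : Matrix n n ℝ}

theorem rayleighQuotient_nonneg (hA : A.PosSemidef) (hM : M.PosSemidef) (v : n → ℝ) :
    0 ≤ rayleighQuotient A M v :=
  div_nonneg (hA.dotProduct_mulVec_self_nonneg v) (hM.dotProduct_mulVec_self_nonneg v)

theorem iInf_rayleighQuotient_nonneg (hA : A.PosSemidef) (hM : M.PosSemidef) :
    0 ≤ ⨅ v : {v : n → ℝ // v ≠ 0}, rayleighQuotient A M v :=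
  Real.iInf_nonneg fun v => rayleighQuotient_nonneg hA hM v

theorem iInf_rayleighQuotient_mul_le (hA : A.PosSemidef) (hM : M.PosSemidef) (x : n → ℝ) :
    (⨅ v : {v : n → ℝ // v ≠ 0}, rayleighQuotient A M v) * (x ⬝ᵥ M *ᵥ x) ≤
      x ⬝ᵥ A *ᵥ x := by
  rcases eq_or_ne x 0 with rfl | hx
  · simp
  have hbdd : BddBelow (Set.range fun v : {v : n → ℝ // v ≠ 0} => rayleighQuotient A M v) :=
    ⟨0, by rintro _ ⟨v, rfl⟩; exact rayleighQuotient_nonneg hA hM v⟩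
  have hle : _ ≤ rayleighQuotient A M x := ciInf_le hbdd ⟨x, hx⟩
  rcases (hM.dotProduct_mulVec_self_nonneg x).eq_or_lt with hxMx | hxMx
  · rw [← hxMx, mul_zero]
    exact hA.dotProduct_mulVec_self_nonneg x
  · exact (le_div_iff₀ hxMx).mp hle

theorem sqrt_dotProduct_mulVec_le_of_add_smul_mulVec_eq [DecidableEq n] (hA : A.PosSemidef)
    (hM : M.PosDef) {t : ℝ} (ht : 0 < t) {x f : n → ℝ} (hx : (A + t • M) *ᵥ x = f) :
    √(x ⬝ᵥ M *ᵥ x) ≤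
      √(f ⬝ᵥ M⁻¹ *ᵥ f) / (t + ⨅ v : {v : n → ℝ // v ≠ 0}, rayleighQuotient A M v) := by
  set lam := ⨅ v : {v : n → ℝ // v ≠ 0}, rayleighQuotient A M v
  have hlam : 0 < t + lam := by linarith [iInf_rayleighQuotient_nonneg hA hM.posSemidef]
  set a := √(x ⬝ᵥ M *ᵥ x)
  set b := √(f ⬝ᵥ M⁻¹ *ᵥ f)
  have energy : (t + lam) * (a * a) ≤ a * b :=
    calc (t + lam) * (a * a) = lam * (x ⬝ᵥ M *ᵥ x) + t * (x ⬝ᵥ M *ᵥ x) := by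
          rw [Real.mul_self_sqrt (hM.posSemidef.dotProduct_mulVec_self_nonneg x)]; ring
      _ ≤ x ⬝ᵥ A *ᵥ x + t * (x ⬝ᵥ M *ᵥ x) := by
          gcongr; exact iInf_rayleighQuotient_mul_le hA hM.posSemidef x
      _ = x ⬝ᵥ f := by
          rw [← hx, add_mulVec, dotProduct_add, smul_mulVec, dotProduct_smul, smul_eq_mul]
      _ ≤ a * b := hM.dotProduct_le_sqrt_mul_sqrt_inv x f
  rw [le_div_iff₀ hlam]
  by_cases ha : a = 0
  · rw [ha, zero_mul]
    exact Real.sqrt_nonneg _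
  · have : 0 < a := lt_of_le_of_ne (Real.sqrt_nonneg _) (Ne.symm ha)
    nlinarith

end Matrix

/-- For SPD `A, M` and `t > 0`: `A + tM` is SPD, `t ↦ (A + tM)⁻¹ f` is
continuous (on `t > 0`), and `‖(A+tM)⁻¹f‖_M ≤ ‖f‖_{M⁻¹}/(t + λ_min(M⁻¹A))`, where
`λ_min(M⁻¹A)` is the smallest generalized eigenvalue of `Ax = λMx`, i.e. the infimum
of the Rayleigh quotients `(vᵀAv)/(vᵀMv)`. -/
theorem stmt17 {N : ℕ} (A M : Matrix (Fin N) (Fin N) ℝ) (hA : A.PosDef) (hM : M.PosDef)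
    (f : Fin N → ℝ) (t : ℝ) (ht : 0 < t) :
    (A + t • M).PosDef ∧
      ContinuousOn (fun τ : ℝ => (A + τ • M)⁻¹ *ᵥ f) (Set.Ioi 0) ∧
      Real.sqrt (((A + t • M)⁻¹ *ᵥ f) ⬝ᵥ (M *ᵥ ((A + t • M)⁻¹ *ᵥ f))) ≤
        Real.sqrt (f ⬝ᵥ (M⁻¹ *ᵥ f)) /
          (t + ⨅ v : {v : Fin N → ℝ // v ≠ 0},
            (v.1 ⬝ᵥ (A *ᵥ v.1)) / (v.1 ⬝ᵥ (M *ᵥ v.1))) := by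
  have hPosDef : ∀ τ : ℝ, 0 < τ → (A + τ • M).PosDef := fun τ hτ => hA.add (hM.smul hτ)
  have hS := hPosDef t ht
  refine ⟨hS, ?_, ?_⟩
  · have hinv : ContinuousOn (fun τ : ℝ => (A + τ • M)⁻¹) (Set.Ioi 0) :=
      (by fun_prop : Continuous fun τ : ℝ => A + τ • M).continuousOn.matrix_inv
        fun τ hτ => (hPosDef τ hτ).det_pos.ne'
    exact (continuous_id.matrix_mulVec continuous_const).comp_continuousOn hinv
  · refine sqrt_dotProduct_mulVec_le_of_add_smul_mulVec_eq hA.posSemidef hM ht ?_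
    rw [mulVec_mulVec, mul_nonsing_inv _ (isUnit_iff_ne_zero.mpr hS.det_pos.ne'), one_mulVec]
end
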